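/- For any self-adjoint operators a₁,…,a_n with a_i acting on the i-th qubit of an n-qubit system, ‖a_i‖ ≤ 1, and any self-adjoint c with ‖c‖ ≤ 1, every separable n-qubit density matrix ρ satisfies |Tr(ρ [ā, c])| ≤ 2/√n, where ā = (1/n)Σᵢ aᵢ. -/

import Mathlib

open Matrix
open scoped ComplexOrder Classical

/-- The operator `a` acting on the `i`-th qubit of an `n`-qubit system (identity elsewhere). -/
noncomputable def localOp (n : ℕ) (i : Fin n) (a : Matrix (Fin 2) (Fin 2) ℂ) :
    Matrix (Fin n → Fin 2) (Fin n → Fin 2) ℂ :=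
  fun f g => if ∀ j, j ≠ i → f j = g j then a (f i) (g i) else 0

/-- The product vector `⊗ⱼ φⱼ` of single-qubit vectors. -/
def prodVec {n : ℕ} (φ : Fin n → Fin 2 → ℂ) : (Fin n → Fin 2) → ℂ :=
  fun f => ∏ j, φ j (f j)

/-- Full separability of an `n`-qubit state: a convex combination of projectors onto
product unit vectors. -/
def FullySepState {n : ℕ} (ρ : Matrix (Fin n → Fin 2) (Fin n → Fin 2) ℂ) : Prop :=
  ∃ (k : ℕ) (p : Fin k → ℝ) (φ : Fin k → Fin n → Fin 2 → ℂ),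
    (∀ i, 0 ≤ p i) ∧ (∑ i, p i = 1) ∧
    (∀ i j, ∑ x, ‖φ i j x‖ ^ 2 = 1) ∧
    ρ = ∑ i, (p i : ℂ) • vecMulVec (prodVec (φ i)) (star (prodVec (φ i)))

noncomputable def ipc {α : Type*} [Fintype α] (u v : α → ℂ) : ℂ :=
  ∑ x, (starRingEnd ℂ) (u x) * v x

lemma ipc_adj {α : Type*} [Fintype α] (M : Matrix α α ℂ) (u v : α → ℂ) :
    ipc u (M *ᵥ v) = ipc (Mᴴ *ᵥ u) v := by
  simp only [ipc, Matrix.mulVec, dotProduct, Matrix.conjTranspose_apply, map_sum,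
    Finset.mul_sum, Finset.sum_mul]
  rw [Finset.sum_comm]
  refine Finset.sum_congr rfl fun x _ => Finset.sum_congr rfl fun y _ => ?_
  simp only [_root_.map_mul, starRingEnd_self_apply, star_star, RCLike.star_def]
  ring

lemma ipc_conj {α : Type*} [Fintype α] (u v : α → ℂ) :
    (starRingEnd ℂ) (ipc u v) = ipc v u := by
  simp [ipc, map_sum, mul_comm]

lemma ipc_dot {α : Type*} [Fintype α] (u v : α → ℂ) :
    ipc u v = dotProduct (star u) v := by
  simp [ipc, dotProduct]

lemma ipc_cs {α : Type*} [Fintype α] (u v : α → ℂ) :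
    ‖ipc u v‖ ≤ Real.sqrt (ipc u u).re * Real.sqrt (ipc v v).re := by
  let u' : EuclideanSpace ℂ α := WithLp.toLp 2 u
  let v' : EuclideanSpace ℂ α := WithLp.toLp 2 v
  have hip : ∀ x y : α → ℂ, ipc x y = @inner ℂ (EuclideanSpace ℂ α) _ (WithLp.toLp 2 x) (WithLp.toLp 2 y) := by
    intro x y
    show _ = @inner ℂ (EuclideanSpace ℂ α) _ (WithLp.toLp 2 x) (WithLp.toLp 2 y)
    rw [PiLp.inner_apply]
    simp [ipc, RCLike.inner_apply, mul_comm]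
  have h1 : (ipc u u).re = ‖u'‖ ^ 2 := by
    rw [hip]; rw [← inner_self_eq_norm_sq (𝕜 := ℂ) u']; simp [RCLike.re_to_complex]; rfl
  have h2 : (ipc v v).re = ‖v'‖ ^ 2 := by
    rw [hip]; rw [← inner_self_eq_norm_sq (𝕜 := ℂ) v']; simp [RCLike.re_to_complex]; rfl
  have := norm_inner_le_norm (𝕜 := ℂ) (E := EuclideanSpace ℂ α) u' v'
  rw [hip u v]
  calc ‖(@inner ℂ _ _ u' v')‖ ≤ ‖u'‖ * ‖v'‖ := this
    _ = Real.sqrt (ipc u u).re * Real.sqrt (ipc v v).re := by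
        rw [h1, h2, Real.sqrt_sq (norm_nonneg _), Real.sqrt_sq (norm_nonneg _)]

lemma localOp_isHermitian {n : ℕ} (i : Fin n) (a : Matrix (Fin 2) (Fin 2) ℂ)
    (ha : a.IsHermitian) : (localOp n i a).IsHermitian := by
  ext f g
  simp only [Matrix.conjTranspose_apply, localOp]
  by_cases h : ∀ j, j ≠ i → f j = g j
  · have h' : ∀ j, j ≠ i → g j = f j := fun j hj => (h j hj).symm
    rw [if_pos h, if_pos h']
    have := congrFun (congrFun ha (f i)) (g i)
    simpa [Matrix.conjTranspose_apply] using this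
  · have h' : ¬ ∀ j, j ≠ i → g j = f j := fun hh => h fun j hj => (hh j hj).symm
    rw [if_neg h, if_neg h']
    simp

lemma localOp_mulVec {n : ℕ} (i : Fin n) (a : Matrix (Fin 2) (Fin 2) ℂ)
    (φ : Fin n → Fin 2 → ℂ) :
    localOp n i a *ᵥ prodVec φ = prodVec (Function.update φ i (a *ᵥ φ i)) := by
  funext f
  have hinj : Function.Injective (fun x : Fin 2 => Function.update f i x) := by
    intro x y h
    have := congrFun h i
    simpa using this
  have hsupp : ∀ g : Fin n → Fin 2, g ∉ Finset.univ.image (fun x => Function.update f i x) →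
      (if ∀ j, j ≠ i → f j = g j then a (f i) (g i) else 0) * prodVec φ g = 0 := by
    intro g hg
    rw [if_neg, zero_mul]
    intro h
    apply hg
    refine Finset.mem_image.2 ⟨g i, Finset.mem_univ _, ?_⟩
    funext j
    by_cases hj : j = i
    · subst hj; simp
    · rw [Function.update_of_ne hj]; exact h j hj
  have lhs : (localOp n i a *ᵥ prodVec φ) f
      = ∑ x : Fin 2, a (f i) x * prodVec φ (Function.update f i x) := by
    show (∑ g, (if ∀ j, j ≠ i → f j = g j then a (f i) (g i) else 0) * prodVec φ g) = _
    rw [← Finset.sum_subset (Finset.subset_univ _) (fun g _ hg => hsupp g hg),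
      Finset.sum_image (fun x _ y _ h => hinj h)]
    refine Finset.sum_congr rfl fun x _ => ?_
    rw [if_pos (fun j hj => (Function.update_of_ne hj _ _).symm)]
    simp
  rw [lhs]
  have hsplit : ∀ (ψ : Fin n → Fin 2 → ℂ) (g : Fin n → Fin 2),
      prodVec ψ g = ψ i (g i) * ∏ j ∈ Finset.univ.erase i, ψ j (g j) := by
    intro ψ g
    rw [prodVec, ← Finset.mul_prod_erase Finset.univ _ (Finset.mem_univ i)]
  have rhs : prodVec (Function.update φ i (a *ᵥ φ i)) f
      = (∑ x : Fin 2, a (f i) x * φ i x) * ∏ j ∈ Finset.univ.erase i, φ j (f j) := by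
    rw [hsplit]
    congr 1
    · rw [Function.update_self]; rfl
    · refine Finset.prod_congr rfl fun j hj => ?_
      rw [Function.update_of_ne (Finset.ne_of_mem_erase hj)]
  rw [rhs, Finset.sum_mul]
  refine Finset.sum_congr rfl fun x _ => ?_
  rw [hsplit]
  have : ∏ j ∈ Finset.univ.erase i, φ j (Function.update f i x j)
      = ∏ j ∈ Finset.univ.erase i, φ j (f j) :=
    Finset.prod_congr rfl fun j hj => by rw [Function.update_of_ne (Finset.ne_of_mem_erase hj)]
  rw [Function.update_self, this]
  ring

lemma ipc_prodVec {n : ℕ} (φ ψ : Fin n → Fin 2 → ℂ) :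
    ipc (prodVec φ) (prodVec ψ) = ∏ j, ipc (φ j) (ψ j) := by
  simp only [ipc, prodVec, map_prod, ← Finset.prod_mul_distrib]
  rw [Fintype.prod_sum (f := fun j x => (starRingEnd ℂ) (φ j x) * ψ j x)]

lemma ipc_smul_right {α : Type*} [Fintype α] (r : ℂ) (u v : α → ℂ) :
    ipc u (r • v) = r * ipc u v := by
  simp only [ipc, Pi.smul_apply, smul_eq_mul, Finset.mul_sum]
  exact Finset.sum_congr rfl fun x _ => by ring

lemma ipc_smul_left {α : Type*} [Fintype α] (r : ℂ) (u v : α → ℂ) :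
    ipc (r • u) v = (starRingEnd ℂ) r * ipc u v := by
  simp only [ipc, Pi.smul_apply, smul_eq_mul, _root_.map_mul, Finset.mul_sum]
  exact Finset.sum_congr rfl fun x _ => by ring

lemma ipc_sub_right {α : Type*} [Fintype α] (u v w : α → ℂ) :
    ipc u (v - w) = ipc u v - ipc u w := by
  simp [ipc, mul_sub, Finset.sum_sub_distrib]

lemma ipc_sub_left {α : Type*} [Fintype α] (u v w : α → ℂ) :
    ipc (u - v) w = ipc u w - ipc v w := by
  simp [ipc, sub_mul, map_sub, Finset.sum_sub_distrib]

lemma ipc_add_left {α : Type*} [Fintype α] (u v w : α → ℂ) :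
    ipc (u + v) w = ipc u w + ipc v w := by
  simp [ipc, add_mul, map_add, Finset.sum_add_distrib]

lemma ipc_sum_right {α ι : Type*} [Fintype α] (s : Finset ι) (u : α → ℂ) (v : ι → α → ℂ) :
    ipc u (∑ i ∈ s, v i) = ∑ i ∈ s, ipc u (v i) := by
  simp only [ipc, Finset.sum_apply, Finset.mul_sum]
  rw [Finset.sum_comm]

lemma sum_mulVec' {α ι : Type*} [Fintype α] (s : Finset ι) (M : ι → Matrix α α ℂ) (v : α → ℂ) :
    (∑ i ∈ s, M i) *ᵥ v = ∑ i ∈ s, M i *ᵥ v := by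
  ext x
  simp only [Matrix.mulVec, dotProduct, Finset.sum_apply, Matrix.sum_apply, Finset.sum_mul]
  rw [Finset.sum_comm]

lemma mulVec_sum' {α ι : Type*} [Fintype α] (s : Finset ι) (M : Matrix α α ℂ) (v : ι → α → ℂ) :
    M *ᵥ (∑ i ∈ s, v i) = ∑ i ∈ s, M *ᵥ v i := by
  ext x
  simp only [Matrix.mulVec, dotProduct, Finset.sum_apply, Finset.mul_sum]
  rw [Finset.sum_comm]

lemma ipc_self_norm {α : Type*} [Fintype α] (x : α → ℂ) :
    ipc x x = ((∑ a, ‖x a‖ ^ 2 : ℝ) : ℂ) := by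
  rw [show ((∑ a, ‖x a‖ ^ 2 : ℝ) : ℂ) = ∑ a, ((‖x a‖ ^ 2 : ℝ) : ℂ) by push_cast; rfl]
  refine Finset.sum_congr rfl fun a _ => ?_
  rw [mul_comm, Complex.mul_conj]
  congr 1
  rw [Complex.normSq_eq_norm_sq]

lemma ipc_prod_update {n : ℕ} (φ : Fin n → Fin 2 → ℂ) (hφ : ∀ j, ipc (φ j) (φ j) = 1)
    (i : Fin n) (x : Fin 2 → ℂ) :
    ipc (prodVec φ) (prodVec (Function.update φ i x)) = ipc (φ i) x := by
  rw [ipc_prodVec, ← Finset.mul_prod_erase Finset.univ _ (Finset.mem_univ i),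
    Function.update_self]
  have e : ∏ j ∈ Finset.univ.erase i, ipc (φ j) (Function.update φ i x j)
      = ∏ j ∈ Finset.univ.erase i, (1 : ℂ) := by
    refine Finset.prod_congr rfl fun j hj => ?_
    rw [Function.update_of_ne (Finset.ne_of_mem_erase hj)]
    exact hφ j
  rw [e, Finset.prod_const_one, mul_one]

lemma ipc_prod_update2 {n : ℕ} (φ : Fin n → Fin 2 → ℂ) (hφ : ∀ j, ipc (φ j) (φ j) = 1)
    (i j : Fin n) (hij : i ≠ j) (x y : Fin 2 → ℂ) :
    ipc (prodVec φ) (prodVec (Function.update (Function.update φ j y) i x))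
      = ipc (φ i) x * ipc (φ j) y := by
  rw [ipc_prodVec, ← Finset.mul_prod_erase Finset.univ _ (Finset.mem_univ i),
    Function.update_self]
  have hj : j ∈ Finset.univ.erase i := Finset.mem_erase.2 ⟨hij.symm, Finset.mem_univ _⟩
  rw [← Finset.mul_prod_erase _ _ hj]
  have e1 : Function.update (Function.update φ j y) i x j = y := by
    rw [Function.update_of_ne hij.symm, Function.update_self]
  rw [e1]
  have e2 : ∏ k ∈ (Finset.univ.erase i).erase j,
      ipc (φ k) (Function.update (Function.update φ j y) i x k)
      = ∏ k ∈ (Finset.univ.erase i).erase j, (1 : ℂ) := by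
    refine Finset.prod_congr rfl fun k hk => ?_
    rw [Function.update_of_ne (Finset.ne_of_mem_erase (Finset.mem_of_mem_erase hk)),
      Function.update_of_ne (Finset.ne_of_mem_erase hk)]
    exact hφ k
  rw [e2, Finset.prod_const_one, mul_one]

lemma ipc_prod_self {n : ℕ} (φ : Fin n → Fin 2 → ℂ) (hφ : ∀ j, ipc (φ j) (φ j) = 1) :
    ipc (prodVec φ) (prodVec φ) = 1 := by
  rw [ipc_prodVec]
  simp [hφ]

lemma trace_mul_vecMulVec {α : Type*} [Fintype α] (M : Matrix α α ℂ) (v : α → ℂ) :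
    (M * vecMulVec v (star v)).trace = ipc v (M *ᵥ v) := by
  simp only [Matrix.trace, Matrix.diag_apply, Matrix.mul_apply, Matrix.vecMulVec_apply,
    Pi.star_apply, ipc, Matrix.mulVec, dotProduct, Finset.mul_sum, RCLike.star_def]
  exact Finset.sum_congr rfl fun x _ => Finset.sum_congr rfl fun y _ => by ring

lemma pure_core {n : ℕ} (a : Fin n → Matrix (Fin 2) (Fin 2) ℂ)
    (ha : ∀ i, (a i).IsHermitian)
    (hanorm : ∀ i, ((1 : Matrix (Fin 2) (Fin 2) ℂ) - a i * a i).PosSemidef)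
    (c : Matrix (Fin n → Fin 2) (Fin n → Fin 2) ℂ)
    (hc : c.IsHermitian)
    (hcnorm : ((1 : Matrix (Fin n → Fin 2) (Fin n → Fin 2) ℂ) - c * c).PosSemidef)
    (φ : Fin n → Fin 2 → ℂ) (hφ : ∀ j, ipc (φ j) (φ j) = 1) :
    ‖ipc (prodVec φ)
      (((∑ i, localOp n i (a i)) * c - c * ∑ i, localOp n i (a i)) *ᵥ prodVec φ)‖
      ≤ 2 * Real.sqrt n := by
  set v := prodVec φ with hv
  set A := ∑ i, localOp n i (a i) with hA
  have hAH : Aᴴ = A := by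
    rw [hA, Matrix.conjTranspose_sum]
    exact Finset.sum_congr rfl fun i _ => localOp_isHermitian i (a i) (ha i)
  set μ : Fin n → ℂ := fun i => ipc (φ i) (a i *ᵥ φ i) with hμdef
  have hμflip : ∀ i, μ i = ipc (a i *ᵥ φ i) (φ i) := by
    intro i
    rw [hμdef]
    show ipc (φ i) (a i *ᵥ φ i) = _
    rw [ipc_adj, (ha i)]
  have hμconj : ∀ i, (starRingEnd ℂ) (μ i) = μ i := by
    intro i
    rw [hμdef]
    show (starRingEnd ℂ) (ipc (φ i) (a i *ᵥ φ i)) = _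
    rw [ipc_conj, ← hμflip]
  have hμre : ∀ i, ((μ i).re : ℂ) = μ i := fun i => Complex.conj_eq_iff_re.1 (hμconj i)
  set s : Fin n → ℂ := fun i => ipc (φ i) (a i *ᵥ (a i *ᵥ φ i)) with hsdef
  have hvv : ipc v v = 1 := ipc_prod_self φ hφ
  have hexp1 : ∀ i, ipc v (localOp n i (a i) *ᵥ v) = μ i := by
    intro i
    rw [hv, localOp_mulVec, ipc_prod_update φ hφ]
  have hAv : A *ᵥ v = ∑ i, localOp n i (a i) *ᵥ v := by rw [hA, sum_mulVec']
  have hvAv : ipc v (A *ᵥ v) = ∑ i, μ i := by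
    rw [hAv, ipc_sum_right]
    exact Finset.sum_congr rfl fun i _ => hexp1 i
  have hexp2 : ∀ i j, ipc v (localOp n i (a i) *ᵥ (localOp n j (a j) *ᵥ v))
      = if i = j then s i else μ i * μ j := by
    intro i j
    rw [hv, localOp_mulVec, localOp_mulVec]
    by_cases hij : i = j
    · subst hij
      rw [if_pos rfl, Function.update_self, Function.update_idem, ipc_prod_update φ hφ]
    · rw [if_neg hij, Function.update_of_ne hij, ipc_prod_update2 φ hφ i j hij]
  have hAAv : ipc v (A *ᵥ (A *ᵥ v)) = (∑ i, s i) + ((∑ i, μ i) * (∑ i, μ i) - ∑ i, μ i * μ i) := by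
    rw [hAv, mulVec_sum', ipc_sum_right]
    have e1 : ∀ j ∈ Finset.univ, ipc v (A *ᵥ (localOp n j (a j) *ᵥ v))
        = ∑ i, (if i = j then s i else μ i * μ j) := by
      intro j _
      rw [hA, sum_mulVec', ipc_sum_right]
      exact Finset.sum_congr rfl fun i _ => hexp2 i j
    rw [Finset.sum_congr rfl e1]
    have e2 : ∀ j i, (if i = j then s i else μ i * μ j)
        = μ i * μ j + (if i = j then s i - μ i * μ i else 0) := by
      intro j i
      by_cases h : i = j
      · subst h; simp
      · simp [h]
    calc (∑ j, ∑ i, (if i = j then s i else μ i * μ j))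
        = ∑ j, ∑ i, (μ i * μ j + (if i = j then s i - μ i * μ i else 0)) := by
          exact Finset.sum_congr rfl fun j _ => Finset.sum_congr rfl fun i _ => e2 j i
      _ = (∑ j, ∑ i, μ i * μ j) + ∑ j, ∑ i, (if i = j then s i - μ i * μ i else 0) := by
          rw [← Finset.sum_add_distrib]
          exact Finset.sum_congr rfl fun j _ => Finset.sum_add_distrib
      _ = (∑ i, μ i) * (∑ i, μ i) + ∑ j, (s j - μ j * μ j) := by
          congr 1
          · have e3 : ∀ j ∈ (Finset.univ : Finset (Fin n)), ∑ i, μ i * μ j = (∑ i, μ i) * μ j :=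
              fun j _ => (Finset.sum_mul _ _ _).symm
            rw [Finset.sum_congr rfl e3, ← Finset.mul_sum]
          · exact Finset.sum_congr rfl fun j _ => by simp
      _ = (∑ i, s i) + ((∑ i, μ i) * (∑ i, μ i) - ∑ i, μ i * μ i) := by
          rw [Finset.sum_sub_distrib]; ring
  set lamc : ℂ := ∑ i, μ i with hlam
  have hlamconj : (starRingEnd ℂ) lamc = lamc := by
    rw [hlam, map_sum]
    exact Finset.sum_congr rfl fun i _ => hμconj i
  set w : (Fin n → Fin 2) → ℂ := (A *ᵥ v) - lamc • v with hw
  set u : (Fin n → Fin 2) → ℂ := c *ᵥ v with hu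
  have hAvv : ipc (A *ᵥ v) v = lamc := by
    rw [← ipc_conj, hvAv]; exact hlamconj
  have hAvAv : ipc (A *ᵥ v) (A *ᵥ v) = ipc v (A *ᵥ (A *ᵥ v)) := by
    symm; rw [ipc_adj, hAH]
  have hww : ipc w w = (∑ i, s i) - ∑ i, μ i * μ i := by
    rw [hw, ipc_sub_left, ipc_sub_right, ipc_sub_right]
    simp only [ipc_smul_left, ipc_smul_right]
    rw [hAvAv, hAAv, hAvv, hvAv, hvv, hlamconj]
    ring
  -- real part bounds
  have hsre : ∀ i, (s i).re ≤ 1 := by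
    intro i
    have h0 := (hanorm i).dotProduct_mulVec_nonneg (φ i)
    rw [← ipc_dot, Matrix.sub_mulVec, Matrix.one_mulVec, ipc_sub_right, hφ i,
      ← Matrix.mulVec_mulVec] at h0
    have h0' : (0 : ℂ) ≤ 1 - s i := h0
    have := (Complex.le_def.1 h0').1
    simp only [Complex.zero_re, Complex.sub_re, Complex.one_re] at this
    linarith
  have hwwre : (ipc w w).re ≤ (n : ℝ) := by
    rw [hww]
    have : ((∑ i, s i) - ∑ i, μ i * μ i).re = ∑ i, ((s i).re - (μ i).re ^ 2) := by
      rw [Complex.sub_re, Complex.re_sum, Complex.re_sum, ← Finset.sum_sub_distrib]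
      refine Finset.sum_congr rfl fun i _ => ?_
      congr 1
      rw [← hμre i]
      simp [← Complex.ofReal_mul, sq]
    rw [this]
    calc ∑ i, ((s i).re - (μ i).re ^ 2) ≤ ∑ _i : Fin n, (1 : ℝ) := by
          refine Finset.sum_le_sum fun i _ => ?_
          have := hsre i
          nlinarith [sq_nonneg (μ i).re]
      _ = (n : ℝ) := by simp
  have huu : ipc u u = ipc v (c *ᵥ (c *ᵥ v)) := by
    rw [hu]; symm; rw [ipc_adj, hc]
  have huure : (ipc u u).re ≤ 1 := by
    have h0 := hcnorm.dotProduct_mulVec_nonneg v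
    rw [← ipc_dot, Matrix.sub_mulVec, Matrix.one_mulVec, ipc_sub_right, hvv,
      ← Matrix.mulVec_mulVec, ← huu] at h0
    have := (Complex.le_def.1 h0).1
    simp only [Complex.zero_re, Complex.sub_re, Complex.one_re] at this
    linarith
  -- the commutator expectation
  have hcv : ipc v ((A * c - c * A) *ᵥ v) = ipc w u - (starRingEnd ℂ) (ipc w u) := by
    have h1 : ipc v ((A * c) *ᵥ v) = ipc (A *ᵥ v) u := by
      rw [← Matrix.mulVec_mulVec, ipc_adj, hAH, ← hu]
    have h2 : ipc v ((c * A) *ᵥ v) = ipc u (A *ᵥ v) := by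
      rw [← Matrix.mulVec_mulVec, ipc_adj, hc, ← hu]
    have hvu : (starRingEnd ℂ) (ipc v u) = ipc v u := by
      rw [ipc_conj, hu, ipc_adj, hc]
    have hAveq : A *ᵥ v = w + lamc • v := by rw [hw]; abel
    rw [Matrix.sub_mulVec, ipc_sub_right, h1, h2, ← ipc_conj (A *ᵥ v) u, hAveq,
      ipc_add_left, ipc_smul_left, map_add, _root_.map_mul, Complex.conj_conj, hvu, hlamconj]
    ring
  rw [hcv]
  have habs2 : ‖ipc w u - (starRingEnd ℂ) (ipc w u)‖ ≤ 2 * ‖ipc w u‖ := by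
    calc ‖ipc w u - (starRingEnd ℂ) (ipc w u)‖
        ≤ ‖ipc w u‖ + ‖(starRingEnd ℂ) (ipc w u)‖ := by
          rw [sub_eq_add_neg]
          refine le_trans (norm_add_le _ _) ?_
          rw [norm_neg]
      _ = 2 * ‖ipc w u‖ := by rw [Complex.norm_conj]; ring
  refine le_trans habs2 ?_
  have hcs := ipc_cs w u
  have h1 : Real.sqrt (ipc w w).re ≤ Real.sqrt n := Real.sqrt_le_sqrt hwwre
  have h2 : Real.sqrt (ipc u u).re ≤ 1 := by
    rw [show (1:ℝ) = Real.sqrt 1 by rw [Real.sqrt_one]]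
    exact Real.sqrt_le_sqrt huure
  have : ‖ipc w u‖ ≤ Real.sqrt n := by
    calc ‖ipc w u‖ ≤ Real.sqrt (ipc w w).re * Real.sqrt (ipc u u).re := hcs
      _ ≤ Real.sqrt n * 1 :=
        mul_le_mul h1 h2 (Real.sqrt_nonneg _) (Real.sqrt_nonneg _)
      _ = Real.sqrt n := mul_one _
  linarith

/-- Janzing-Beth witness bound: for self-adjoint single-site operators `aᵢ` of norm ≤ 1
(expressed as `1 − aᵢ² ≥ 0`), a self-adjoint `c` of norm ≤ 1, and the averaging observable
`ā = (1/n) Σᵢ aᵢ`, every fully separable `n`-qubit state satisfies `|Tr(ρ[ā,c])| ≤ 2/√n`. -/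
theorem stmt15 (n : ℕ) (hn : 0 < n)
    (a : Fin n → Matrix (Fin 2) (Fin 2) ℂ)
    (ha : ∀ i, (a i).IsHermitian)
    (hanorm : ∀ i, ((1 : Matrix (Fin 2) (Fin 2) ℂ) - a i * a i).PosSemidef)
    (c : Matrix (Fin n → Fin 2) (Fin n → Fin 2) ℂ)
    (hc : c.IsHermitian)
    (hcnorm : ((1 : Matrix (Fin n → Fin 2) (Fin n → Fin 2) ℂ) - c * c).PosSemidef)
    (ρ : Matrix (Fin n → Fin 2) (Fin n → Fin 2) ℂ)
    (hρ : ρ.PosSemidef) (htr : ρ.trace = 1) (hsep : FullySepState ρ) :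
    ‖((((1 / n : ℂ) • ∑ i, localOp n i (a i)) * c
        - c * ((1 / n : ℂ) • ∑ i, localOp n i (a i))) * ρ).trace‖ ≤ 2 / Real.sqrt n := by
  obtain ⟨k, p, φ, hp0, hp1, hφn, hρ2⟩ := hsep
  set A := ∑ i, localOp n i (a i) with hA
  have hφ1 : ∀ i j, ipc (φ i j) (φ i j) = 1 := by
    intro i j
    rw [ipc_self_norm, hφn i j]
    norm_num
  set Mc := A * c - c * A with hMc
  have hcomm : ((1 / n : ℂ) • A) * c - c * ((1 / n : ℂ) • A) = (1 / n : ℂ) • Mc := by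
    rw [hMc, smul_sub, Matrix.smul_mul, Matrix.mul_smul]
  rw [hcomm, Matrix.smul_mul, Matrix.trace_smul, smul_eq_mul, norm_mul]
  have htr2 : (Mc * ρ).trace = ∑ i, (p i : ℂ) * ipc (prodVec (φ i)) (Mc *ᵥ prodVec (φ i)) := by
    rw [hρ2, Matrix.mul_sum, Matrix.trace_sum]
    refine Finset.sum_congr rfl fun i _ => ?_
    rw [Matrix.mul_smul, Matrix.trace_smul, trace_mul_vecMulVec, smul_eq_mul]
  rw [htr2]
  have habs1n : ‖1 / (n : ℂ)‖ = 1 / (n : ℝ) := by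
    simp
  have hsum : ‖∑ i, (p i : ℂ) * ipc (prodVec (φ i)) (Mc *ᵥ prodVec (φ i))‖
      ≤ 2 * Real.sqrt n := by
    refine le_trans (norm_sum_le _ _) ?_
    calc ∑ i, ‖(p i : ℂ) * ipc (prodVec (φ i)) (Mc *ᵥ prodVec (φ i))‖
        = ∑ i, p i * ‖ipc (prodVec (φ i)) (Mc *ᵥ prodVec (φ i))‖ := by
          refine Finset.sum_congr rfl fun i _ => ?_
          rw [norm_mul, Complex.norm_real, Real.norm_eq_abs, abs_of_nonneg (hp0 i)]
      _ ≤ ∑ i, p i * (2 * Real.sqrt n) := by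
          refine Finset.sum_le_sum fun i _ => ?_
          exact mul_le_mul_of_nonneg_left
            (pure_core a ha hanorm c hc hcnorm (φ i) (hφ1 i)) (hp0 i)
      _ = 2 * Real.sqrt n := by rw [← Finset.sum_mul, hp1, one_mul]
  have hnr : (0 : ℝ) < n := by exact_mod_cast hn
  have hsq : Real.sqrt n * Real.sqrt n = (n : ℝ) := Real.mul_self_sqrt (le_of_lt hnr)
  have hsqpos : 0 < Real.sqrt n := Real.sqrt_pos.2 hnr
  calc ‖1 / (n : ℂ)‖ * ‖∑ i, (p i : ℂ) * ipc (prodVec (φ i)) (Mc *ᵥ prodVec (φ i))‖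
      ≤ (1 / (n : ℝ)) * (2 * Real.sqrt n) := by
        rw [habs1n]
        exact mul_le_mul_of_nonneg_left hsum (by positivity)
    _ = 2 / Real.sqrt n := by
        field_simp
        linear_combination hsq
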